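/- arXiv:1806.09806 — 2 statements merged into one kernel-verified Lean document; each statement's English description precedes it below -/
import Mathlib

section
/- Every nonempty pp-irreducible string w is uniquely factorized as w = w₁ w₂ ⋯ w_k into nonempty strings such that, writing b₀ = 0 and b_i = |w₁ ⋯ w_i|, one has 𝓕_w(b_{i−1} + 1) = b_i for every i ∈ [1:k]; moreover, for every position c with b_{i−1} < c ≤ b_i, the originator satisfies 𝓐_w(c) = b_{i−1} + 1. -/
/-!
Common definitions: strings as `List α` over an alphabet `α`, 1-based positions.
-/

variable {α : Type*}

/-- The substring `w[i:j]` (1-based, inclusive; empty when `j < i`). -/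
def seg (w : List α) (i j : ℕ) : List α := (w.take j).drop (i - 1)

/-- `w` has an even palindrome of radius `r` centered at position `c`:
`r ≤ c`, `c + r ≤ |w|` and `w[c−k+1] = w[c+k]` for all `1 ≤ k ≤ r`
(here expressed with 0-based list indexing: `w[c−k]? = w[c+k−1]?`). -/
def PalAt (w : List α) (c r : ℕ) : Prop :=
  r ≤ c ∧ c + r ≤ w.length ∧ ∀ k, 1 ≤ k → k ≤ r → w[c - k]? = w[c + k - 1]?

/-- `ρ_w(c)`: the maximal even-palindrome radius at center `c`. -/
noncomputable def rho (w : List α) (c : ℕ) : ℕ := sSup {r | PalAt w c r}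

/-- The reduction relation: `x y yᴿ y z → x y z` for nonempty `y`. -/
def Reduces (w w' : List α) : Prop :=
  ∃ x y z : List α, y ≠ [] ∧ w = x ++ y ++ y.reverse ++ y ++ z ∧ w' = x ++ y ++ z

/-- A string is irreducible if no reduction applies to it. -/
def ZIrreducible (w : List α) : Prop := ∀ w', ¬ Reduces w w'

def ZReducible (w : List α) : Prop := ∃ w', Reduces w w'

/-- `w` is pp-irreducible if its longest proper prefix `w[1:|w|−1]` is irreducible. -/
def PPIrreducible (w : List α) : Prop := ZIrreducible w.dropLast

/-- `w` is ss-reducible if it is reducible and pp-irreducible. -/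
def SSReducible (w : List α) : Prop := ZReducible w ∧ PPIrreducible w

/-- A Z-shape occurrence `⟨p1, p2⟩` in `w`: with `s = p2 − p1 ≥ 1`, `p1 − s ≥ 0`,
`p2 + s ≤ |w|` and `w[p1−s+1 : p2+s] = x xᴿ x` where `x = w[p1−s+1 : p1]`. -/
def ZOcc (w : List α) (p1 p2 : ℕ) : Prop :=
  p1 < p2 ∧ p2 - p1 ≤ p1 ∧ p2 + (p2 - p1) ≤ w.length ∧
    seg w (p1 - (p2 - p1) + 1) (p2 + (p2 - p1)) =
      seg w (p1 - (p2 - p1) + 1) p1 ++ (seg w (p1 - (p2 - p1) + 1) p1).reverse ++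
        seg w (p1 - (p2 - p1) + 1) p1

/-- `c ⊏_w d` : `c ≤ d − ρ_w(d) ≤ d ≤ c + ρ_w(c) ≤ d + ρ_w(d)` with `c ≠ d`
(written without truncated subtraction). -/
def Sqsub (w : List α) (c d : ℕ) : Prop :=
  c < d ∧ c + rho w d ≤ d ∧ d ≤ c + rho w c ∧ c + rho w c ≤ d + rho w d

/-- `𝓕_w(c)`: the maximum frontier over all palindrome chains from `c`
(a palindrome chain is a nonempty list starting at `c` whose consecutive
elements are related by `⊏_w`; its frontier is `e + ρ_w(e)` for its last element `e`). -/
noncomputable def maxFrontier (w : List α) (c : ℕ) : ℕ :=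
  sSup {f | ∃ l : List ℕ, l.head? = some c ∧ l.Chain' (Sqsub w) ∧
      ∃ e, l.getLast? = some e ∧ f = e + rho w e}

/-- `𝓐_w(d)`: the smallest position `c` with `c ≤ d ≤ 𝓕_w(c)`. -/
noncomputable def originator (w : List α) (d : ℕ) : ℕ :=
  sInf {c | 1 ≤ c ∧ c ≤ d ∧ d ≤ maxFrontier w c}

/-- A position `c` of a pp-irreducible string `w` is stable if `𝓕_w(c) < |w|`. -/
def Stable (w : List α) (c : ℕ) : Prop := maxFrontier w c < w.length

/-- `c` is strongly stable if every position in `[1:c]` is stable. -/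
def StronglyStable (w : List α) (c : ℕ) : Prop := ∀ e, 1 ≤ e → e ≤ c → Stable w e

/-- `T` is the output of an end-to-end walk on the path graph labeled `u`:
there are vertices `p 0 = 0, …, p |T| = |u|`, each `≤ |u|`, consecutive ones
adjacent, and `T[i] = u[max (p (i−1)) (p i)]` (1-based; here 0-based indexing). -/
def EndToEndWalkOutput (u T : List α) : Prop :=
  ∃ p : ℕ → ℕ, p 0 = 0 ∧ p T.length = u.length ∧
    (∀ i, i ≤ T.length → p i ≤ u.length) ∧
    (∀ i, i < T.length → p (i + 1) = p i + 1 ∨ p i = p (i + 1) + 1) ∧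
    (∀ i, i < T.length → T[i]? = u[max (p i) (p (i + 1)) - 1]?)

/-- `P` is accurate enough between `a` and `b`:
`min (P e) (b − e) = min (ρ_w e) (b − e)` for all `e ∈ [a:b]`. -/
def AccEnough (w : List α) (P : ℕ → ℕ) (a b : ℕ) : Prop :=
  ∀ e, a ≤ e → e ≤ b → min (P e) (b - e) = min (rho w e) (b - e)

open Classical in
/-- `ν_w(c)`: the largest `e` with `e ⊏_w c`, or `1` if there is none. -/
noncomputable def nu (w : List α) (c : ℕ) : ℕ :=
  if ∃ e, Sqsub w e c then sSup {e | Sqsub w e c} else 1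

/-- `c` is left-good w.r.t. `P` if `P` is accurate enough between `ν_w(c)` and `c`. -/
def LeftGood (w : List α) (P : ℕ → ℕ) (c : ℕ) : Prop := AccEnough w P (nu w c) c

/-- `c` is right-good w.r.t. `P` if `P` is accurate enough between `c` and `c + ρ_w(c)`. -/
def RightGood (w : List α) (P : ℕ → ℕ) (c : ℕ) : Prop := AccEnough w P c (c + rho w c)

/-!
In a pp-irreducible string two even palindromes never overlap in a Z shape: if `c < d ≤ c + ρ(c)`
then `c ≤ d − ρ(d)`. So a palindrome chain starting inside the palindrome at `c` can either be
prefixed by `c` or keeps its next position inside that palindrome; either way its frontier is at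
most `𝓕(c)`, and following a chain realising `𝓕(c)` shows that `c ≤ d ≤ 𝓕(c)` implies
`𝓕(d) ≤ 𝓕(c)`. The defining condition forces the block ends to be the iterates of
`b ↦ 𝓕(b + 1)` from `0`, which gives existence and uniqueness, and by monotonicity no maximum
frontier from a position `≤ b_{i−1}` passes `b_{i−1}`, so `b_{i−1} + 1` is the originator of every
position of the `i`-th block.
-/

open Relation

section Palindrome
variable {w : List α} {c d r s : ℕ}

lemma PalAt.mono (h : PalAt w c r) (hsr : s ≤ r) : PalAt w c s :=
  ⟨hsr.trans h.1, by have := h.2.1; omega, fun k hk hks => h.2.2 k hk (hks.trans hsr)⟩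

lemma bddAbove_palAt : BddAbove {r | PalAt w c r} := ⟨c, fun _ h => h.1⟩

lemma palAt_rho (hc : c ≤ w.length) : PalAt w c (rho w c) :=
  Nat.sSup_mem (s := {r | PalAt w c r}) ⟨0, Nat.zero_le c, by omega, fun k hk hk0 => by omega⟩
    bddAbove_palAt

lemma le_rho (h : PalAt w c r) : r ≤ rho w c := le_csSup bddAbove_palAt h

lemma rho_eq_zero_of_length_lt (hc : w.length < c) : rho w c = 0 := by
  have : {r | PalAt w c r} = ∅ := Set.eq_empty_of_forall_notMem fun r h => by
    have := h.2.1; omega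
  rw [rho, this, csSup_empty]
  rfl

lemma add_rho_le_length (hc : c ≤ w.length) : c + rho w c ≤ w.length := (palAt_rho hc).2.1

lemma le_length_of_lt_of_le_add_rho (hcd : c < d) (hd : d ≤ c + rho w c) : c ≤ w.length := by
  by_contra! h
  rw [rho_eq_zero_of_length_lt h] at hd
  omega

lemma palAt_iff_reverse :
    PalAt w c r ↔ r ≤ c ∧ c + r ≤ w.length ∧
      ((w.drop (c - r)).take r).reverse = (w.drop c).take r := by
  refine and_congr_right fun hrc => and_congr_right fun hcr => ?_
  constructor
  · intro h
    refine List.ext_getElem (by simp; omega) fun i hi _ => ?_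
    simp only [List.length_reverse, List.length_take, List.length_drop] at hi
    have := h (i + 1) (by omega) (by omega)
    rw [List.getElem?_eq_getElem (by omega), List.getElem?_eq_getElem (by omega),
      Option.some_inj] at this
    simp only [List.getElem_reverse, List.getElem_take, List.getElem_drop, List.length_take,
      List.length_drop]
    convert this using 2 <;> omega
  · intro h k hk hkr
    have := List.getElem_of_eq h (i := k - 1) (by simp; omega)
    simp only [List.getElem_reverse, List.getElem_take, List.getElem_drop, List.length_take,
      List.length_drop] at this
    rw [List.getElem?_eq_getElem (by omega), List.getElem?_eq_getElem (by omega)]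
    convert congrArg some this using 3 <;> omega

end Palindrome

section Overlap
variable {w : List α} {c d : ℕ}

/-- Were the palindrome at `d` to reach past `c`, the overlap of the palindromes at `c` and `d`
would be a factor `y yᴿ y` ending before the last letter. -/
lemma PPIrreducible.add_rho_le (hpp : PPIrreducible w) (hcd : c < d) (hd : d ≤ c + rho w c) :
    c + rho w d ≤ d := by
  by_contra! hlt
  have hc := le_length_of_lt_of_le_add_rho hcd hd
  have hdw : d ≤ w.length := hd.trans (add_rho_le_length hc)
  have hdn := add_rho_le_length hdw
  set s := d - c
  have hcs : c + s = d := by omega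
  obtain ⟨hsc, -, hpc⟩ := palAt_iff_reverse.1 ((palAt_rho hc).mono (show s ≤ rho w c by omega))
  obtain ⟨-, -, hpd⟩ := palAt_iff_reverse.1 ((palAt_rho hdw).mono (show s ≤ rho w d by omega))
  have hy : (w.drop (c - s)).take s ≠ [] := by simp; omega
  have hc' : w.take c = w.take (c - s) ++ (w.drop (c - s)).take s := by
    rw [← List.take_add, Nat.sub_add_cancel hsc]
  generalize (w.drop (c - s)).take s = y at hy hc' hpc
  rw [show d - s = c by omega, ← hpc, List.reverse_reverse] at hpd
  have htake : w.take (d + s) = w.take (c - s) ++ y ++ y.reverse ++ y := by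
    rw [List.take_add, ← hpd, ← hcs, List.take_add, ← hpc, hc']
  have hdrop : w.dropLast.take (d + s) = w.take (d + s) := by
    rw [List.dropLast_eq_take, List.take_take, min_eq_left (by omega)]
  refine hpp _ ⟨w.take (c - s), y, w.dropLast.drop (d + s), hy, ?_, rfl⟩
  rw [← htake, ← hdrop, List.take_append_drop]

end Overlap

section Frontier
variable {w : List α} {c d e : ℕ}

lemma maxFrontier_eq_sSup_image :
    maxFrontier w c = sSup ((fun e => e + rho w e) '' {e | ReflTransGen (Sqsub w) c e}) := by
  rw [maxFrontier]
  congr 1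
  ext f
  constructor
  · rintro ⟨_ | ⟨c', l⟩, hhead, hchain, e, hlast, rfl⟩
    · simp at hhead
    · obtain rfl : c' = c := by simpa using hhead
      refine ⟨e, List.relationReflTransGen_of_exists_isChain_cons l hchain ?_, rfl⟩
      simpa [List.getLast?_eq_some_getLast] using hlast
  · rintro ⟨e, he, rfl⟩
    obtain ⟨l, hchain, hlast⟩ := List.exists_isChain_cons_of_relationReflTransGen he
    refine ⟨c :: l, rfl, hchain, e, ?_, rfl⟩
    rw [List.getLast?_eq_some_getLast (List.cons_ne_nil _ _), hlast]

lemma Sqsub.le_length (h : Sqsub w c d) : d ≤ w.length :=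
  h.2.2.1.trans (add_rho_le_length (le_length_of_lt_of_le_add_rho h.1 h.2.2.1))

lemma le_length_of_reflTransGen (h : ReflTransGen (Sqsub w) c e) (hc : c ≤ w.length) :
    e ≤ w.length := by
  rcases h.cases_tail with rfl | ⟨_, -, hlast⟩
  exacts [hc, hlast.le_length]

lemma bddAbove_frontiers (hc : c ≤ w.length) :
    BddAbove ((fun e => e + rho w e) '' {e | ReflTransGen (Sqsub w) c e}) := by
  refine ⟨w.length, ?_⟩
  rintro _ ⟨e, he, rfl⟩
  exact add_rho_le_length (le_length_of_reflTransGen he hc)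

lemma add_rho_le_maxFrontier (hc : c ≤ w.length) (he : ReflTransGen (Sqsub w) c e) :
    e + rho w e ≤ maxFrontier w c :=
  maxFrontier_eq_sSup_image (w := w) ▸ le_csSup (bddAbove_frontiers hc) ⟨e, he, rfl⟩

lemma exists_maxFrontier_eq (hc : c ≤ w.length) :
    ∃ e, ReflTransGen (Sqsub w) c e ∧ maxFrontier w c = e + rho w e := by
  rw [maxFrontier_eq_sSup_image]
  obtain ⟨e, he, hF⟩ := Nat.sSup_mem (Set.Nonempty.image _ ⟨c, ReflTransGen.refl⟩)
    (bddAbove_frontiers hc)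
  exact ⟨e, he, hF.symm⟩

lemma self_le_maxFrontier (hc : c ≤ w.length) : c ≤ maxFrontier w c :=
  (Nat.le_add_right c _).trans (add_rho_le_maxFrontier hc ReflTransGen.refl)

lemma maxFrontier_le_length (hc : c ≤ w.length) : maxFrontier w c ≤ w.length := by
  obtain ⟨e, he, hF⟩ := exists_maxFrontier_eq hc
  exact hF ▸ add_rho_le_length (le_length_of_reflTransGen he hc)

lemma Sqsub.maxFrontier_le (h : Sqsub w c d) : maxFrontier w d ≤ maxFrontier w c := by
  have hc := le_length_of_lt_of_le_add_rho h.1 h.2.2.1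
  obtain ⟨e, he, hF⟩ := exists_maxFrontier_eq h.le_length
  exact hF ▸ add_rho_le_maxFrontier hc (he.head h)

end Frontier

section Monotone
variable {w : List α} {c d e : ℕ}

lemma PPIrreducible.sqsub (hpp : PPIrreducible w) (hcd : c < d) (hd : d ≤ c + rho w c)
    (hf : c + rho w c ≤ d + rho w d) : Sqsub w c d :=
  ⟨hcd, hpp.add_rho_le hcd hd, hd, hf⟩

lemma PPIrreducible.add_rho_le_maxFrontier_of_reflTransGen (hpp : PPIrreducible w) (hcd : c < d)
    (hd : d ≤ c + rho w c) (he : ReflTransGen (Sqsub w) d e) : e + rho w e ≤ maxFrontier w c := by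
  have hc := le_length_of_lt_of_le_add_rho hcd hd
  induction he using ReflTransGen.head_induction_on with
  | refl =>
    by_cases hf : c + rho w c ≤ e + rho w e
    · exact add_rho_le_maxFrontier hc (.single (hpp.sqsub hcd hd hf))
    · exact (show e + rho w e ≤ c + rho w c by omega).trans (add_rho_le_maxFrontier hc .refl)
  | @head d d' hdd' hd'e ih =>
    by_cases hf : c + rho w c ≤ d + rho w d
    · exact add_rho_le_maxFrontier hc ((hd'e.head hdd').head (hpp.sqsub hcd hd hf))
    · exact ih (hcd.trans hdd'.1) (by have := hdd'.2.2.1; omega)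

lemma PPIrreducible.maxFrontier_le_of_le_add_rho (hpp : PPIrreducible w) (hcd : c ≤ d)
    (hd : d ≤ c + rho w c) : maxFrontier w d ≤ maxFrontier w c := by
  rcases hcd.eq_or_lt with rfl | hcd
  · rfl
  have hdw := hd.trans (add_rho_le_length (le_length_of_lt_of_le_add_rho hcd hd))
  obtain ⟨e, he, hF⟩ := exists_maxFrontier_eq hdw
  exact hF ▸ hpp.add_rho_le_maxFrontier_of_reflTransGen hcd hd he

lemma PPIrreducible.maxFrontier_le_of_le_maxFrontier (hpp : PPIrreducible w)
    (hc : c ≤ w.length) (hcd : c ≤ d) (hdF : d ≤ maxFrontier w c) :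
    maxFrontier w d ≤ maxFrontier w c := by
  obtain ⟨e, he, hF⟩ := exists_maxFrontier_eq hc
  rw [hF] at hdF
  clear hF
  induction he using ReflTransGen.head_induction_on with
  | refl => exact hpp.maxFrontier_le_of_le_add_rho hcd hdF
  | @head c c' hcc' hc'e ih =>
    by_cases hd : d ≤ c + rho w c
    · exact hpp.maxFrontier_le_of_le_add_rho hcd hd
    · exact (ih hcc'.le_length (by have := hcc'.2.2.1; omega)).trans hcc'.maxFrontier_le

end Monotone

section Boundary
variable {w : List α} {b c : ℕ}

def IsBoundary (w : List α) (b : ℕ) : Prop := ∀ c, 1 ≤ c → c ≤ b → maxFrontier w c ≤ b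

lemma isBoundary_zero : IsBoundary w 0 := fun _ _ _ => by omega

lemma PPIrreducible.isBoundary_maxFrontier_succ (hpp : PPIrreducible w) (hb : IsBoundary w b)
    (hbw : b < w.length) : IsBoundary w (maxFrontier w (b + 1)) := by
  intro c hc hcF
  rcases le_or_gt c b with hcb | hbc
  · have := self_le_maxFrontier (w := w) (show b + 1 ≤ w.length from hbw)
    exact (hb c hc hcb).trans (by omega)
  · exact hpp.maxFrontier_le_of_le_maxFrontier hbw hbc hcF

lemma IsBoundary.originator_eq (hb : IsBoundary w b) (hbc : b < c)
    (hcF : c ≤ maxFrontier w (b + 1)) : originator w c = b + 1 := by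
  have hmem : b + 1 ∈ {c' | 1 ≤ c' ∧ c' ≤ c ∧ c ≤ maxFrontier w c'} := ⟨by omega, hbc, hcF⟩
  refine le_antisymm (Nat.sInf_le hmem) (le_csInf ⟨_, hmem⟩ ?_)
  rintro c' ⟨hc', -, hcF'⟩
  by_contra! h
  have := hb c' hc' (by omega)
  omega

end Boundary

section Factorization
variable {g : ℕ → ℕ} {b n : ℕ} {s : List α} {l : List (List α)}

/-- `l` as the factorization of a suffix that starts after position `b`. -/
def IsStepFactorization (g : ℕ → ℕ) (b : ℕ) (l : List (List α)) : Prop :=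
  (∀ s ∈ l, s ≠ []) ∧
    ∀ i, i < l.length → g ((l.take i).flatten.length + b) = (l.take (i + 1)).flatten.length + b

lemma isStepFactorization_nil : IsStepFactorization g b ([] : List (List α)) := by
  simp [IsStepFactorization]

lemma isStepFactorization_cons :
    IsStepFactorization g b (s :: l) ↔
      s ≠ [] ∧ g b = s.length + b ∧ IsStepFactorization g (s.length + b) l := by
  simp only [IsStepFactorization, List.mem_cons, forall_eq_or_imp, List.length_cons,
    Nat.forall_lt_succ_left, List.take_zero, List.take_succ_cons, List.flatten_nil,
    List.flatten_cons, List.length_nil, List.length_append, add_assoc, zero_add,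
    Nat.add_left_comm s.length]
  tauto

theorem existsUnique_isStepFactorization (hg : ∀ x < n, x < g x ∧ g x ≤ n) (u : List α)
    (b : ℕ) (hu : u.length + b = n) :
    ∃! l : List (List α), l.flatten = u ∧ IsStepFactorization g b l := by
  by_cases hu0 : u = []
  · subst hu0
    refine ⟨[], ⟨rfl, isStepFactorization_nil⟩, ?_⟩
    rintro (_ | ⟨s, l⟩) ⟨hflat, hl⟩
    · rfl
    · exact absurd (List.flatten_eq_nil_iff.1 hflat s List.mem_cons_self)
        (hl.1 s List.mem_cons_self)
  have hbn : b < n := by have := List.length_pos_iff.2 hu0; omega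
  obtain ⟨hbg, hgn⟩ := hg b hbn
  set k := g b - b
  obtain ⟨l, ⟨hflat, hl⟩, huniq⟩ :=
    existsUnique_isStepFactorization hg (u.drop k) (g b) (by simp; omega)
  have hk : (u.take k).length + b = g b := by simp; omega
  refine ⟨u.take k :: l, ⟨by simp [hflat], isStepFactorization_cons.2
    ⟨by simpa using ⟨by omega, hu0⟩, hk.symm, hk ▸ hl⟩⟩, ?_⟩
  rintro (_ | ⟨s, l'⟩) ⟨hflat', hl'⟩
  · exact absurd hflat'.symm hu0
  obtain ⟨-, hgs, hl'⟩ := isStepFactorization_cons.1 hl'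
  have hs : s.length = k := by omega
  rw [List.flatten_cons] at hflat'
  rw [← hflat', List.take_left' hs, huniq l' ⟨by rw [← hflat', List.drop_left' hs], hgs ▸ hl'⟩]
termination_by u.length
decreasing_by simp; omega

lemma IsStepFactorization.boundary_induction {P : ℕ → Prop} (hl : IsStepFactorization g b l)
    (hb : P b) (hg : ∀ x, P x → x < l.flatten.length + b → P (g x)) :
    ∀ i ≤ l.length, P ((l.take i).flatten.length + b) := by
  induction l generalizing b with
  | nil => intro i _; simpa using hb
  | cons s l ih =>
    obtain ⟨hs, hgb, hl⟩ := isStepFactorization_cons.1 hl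
    have hsb : P (s.length + b) :=
      hgb ▸ hg b hb (by have := List.length_pos_iff.2 hs; simp; omega)
    rintro (_ | i) hi
    · simpa using hb
    · have hg' : ∀ x, P x → x < l.flatten.length + (s.length + b) → P (g x) :=
        fun x hx hxl => hg x hx (by rw [List.flatten_cons, List.length_append]; omega)
      have := ih hl hsb hg' i (by simpa using hi)
      simpa [add_assoc, Nat.add_left_comm] using this

end Factorization

theorem ppIrreducible_unique_factorization_general (w : List α)
    (hpp : PPIrreducible w) :
    (∃! l : List (List α),
        l.flatten = w ∧ (∀ s ∈ l, s ≠ []) ∧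
          ∀ i, i < l.length →
            maxFrontier w ((l.take i).flatten.length + 1) = (l.take (i + 1)).flatten.length) ∧
      ∀ l : List (List α),
        (l.flatten = w ∧ (∀ s ∈ l, s ≠ []) ∧
            ∀ i, i < l.length →
              maxFrontier w ((l.take i).flatten.length + 1) = (l.take (i + 1)).flatten.length) →
          ∀ i, i < l.length → ∀ c, (l.take i).flatten.length < c →
            c ≤ (l.take (i + 1)).flatten.length →
              originator w c = (l.take i).flatten.length + 1 := by
  have hstep : ∀ x < w.length, x < maxFrontier w (x + 1) ∧ maxFrontier w (x + 1) ≤ w.length :=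
    fun x hx => ⟨self_le_maxFrontier (w := w) hx, maxFrontier_le_length hx⟩
  refine ⟨existsUnique_isStepFactorization hstep w 0 rfl, ?_⟩
  rintro l ⟨hflat, hl⟩ i hi c hc hcF
  have hl' : IsStepFactorization (fun x => maxFrontier w (x + 1)) 0 l := hl
  have hB : IsBoundary w ((l.take i).flatten.length) :=
    hl'.boundary_induction isBoundary_zero
      (fun x hx hxw => hpp.isBoundary_maxFrontier_succ hx (hflat ▸ hxw)) i hi.le
  exact hB.originator_eq hc (hcF.trans (hl.2 i hi).ge)

/-- every nonempty pp-irreducible string `w` is uniquely factorized as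
`w = w₁ ⋯ w_k` into nonempty strings with `𝓕_w(b_{i−1}+1) = b_i` (where
`b_i = |w₁ ⋯ w_i|`), and for this factorization `𝓐_w(c) = b_{i−1}+1` whenever
`b_{i−1} < c ≤ b_i`. -/
theorem ppIrreducible_unique_factorization (w : List α) (hw : w ≠ [])
    (hpp : PPIrreducible w) :
    (∃! l : List (List α),
        l.flatten = w ∧ (∀ s ∈ l, s ≠ []) ∧
          ∀ i, i < l.length →
            maxFrontier w ((l.take i).flatten.length + 1) = (l.take (i + 1)).flatten.length) ∧
      ∀ l : List (List α),
        (l.flatten = w ∧ (∀ s ∈ l, s ≠ []) ∧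
            ∀ i, i < l.length →
              maxFrontier w ((l.take i).flatten.length + 1) = (l.take (i + 1)).flatten.length) →
          ∀ i, i < l.length → ∀ c, (l.take i).flatten.length < c →
            c ≤ (l.take (i + 1)).flatten.length →
              originator w c = (l.take i).flatten.length + 1 :=
  ppIrreducible_unique_factorization_general w hpp
end

section
/- Let w be a pp-irreducible string and c < d positions of w with d ≤ 𝓕_w(c). Then 𝓕_w(c) ≥ 𝓕_w(d). -/
/-!
Common definitions: strings as `List α` over an alphabet `α`, 1-based positions.
-/

variable {α : Type*}

/-!
Let `c < d ≤ 𝓕(c)` and take the last centre `a < d` of a chain realising `𝓕(c)`, so that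
`d ≤ a + ρ(a)`. If `ρ(d) ≤ d - a`, then either `a ⊏ d`, so the chain extends to `d`, or the
frontier of `d` is already below that of `a`; in both cases `d + ρ(d) ≤ 𝓕(c)`. If `ρ(d) > d - a`,
the palindromes of radius `d - a` at `a` and at `d` overlap in a factor `y yᴿ y` that ends before
the last letter, contradicting pp-irreducibility. Hence every centre reachable from `d` stays in
`(c, 𝓕(c)]` and has frontier at most `𝓕(c)`.
-/

open Relation

namespace PalAt

variable {w : List α} {c r : ℕ}

theorem mono_s13 {r' : ℕ} (h : PalAt w c r) (hr : r' ≤ r) : PalAt w c r' :=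
  ⟨hr.trans h.1, by have := h.2.1; omega, fun k hk hkr => h.2.2 k hk (hkr.trans hr)⟩

theorem dropLast (h : PalAt w c r) (hlt : c + r < w.length) : PalAt w.dropLast c r := by
  obtain ⟨hrc, -, hpal⟩ := h
  refine ⟨hrc, by simp only [List.length_dropLast]; omega, fun k hk hkr => ?_⟩
  rw [List.getElem?_dropLast, List.getElem?_dropLast, if_pos (by omega), if_pos (by omega)]
  exact hpal k hk hkr

theorem reverse_take_drop_eq (h : PalAt w c r) :
    ((w.drop (c - r)).take r).reverse = (w.drop c).take r := by
  obtain ⟨hrc, hcr, hpal⟩ := h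
  refine List.ext_getElem? fun i => ?_
  by_cases hi : i < r
  · rw [List.getElem?_reverse (by simp; omega), List.getElem?_take, List.getElem?_take, if_pos hi,
      if_pos (by simp; omega), List.getElem?_drop, List.getElem?_drop]
    simp only [List.length_take, List.length_drop]
    have := hpal (i + 1) (by omega) (by omega)
    rwa [show c - (i + 1) = c - r + (min r (w.length - (c - r)) - 1 - i) by omega,
      show c + (i + 1) - 1 = c + i by omega] at this
  · rw [List.getElem?_eq_none (by simp; omega), List.getElem?_eq_none (by simp; omega)]

end PalAt

theorem zReducible_of_palAt {w : List α} {a s : ℕ} (hs : 0 < s) (ha : PalAt w a s)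
    (has : PalAt w (a + s) s) : ZReducible w := by
  set y := (w.drop (a - s)).take s
  have hy : y.length = s := by have := ha.2.1; simp [y]; omega
  have hmid : (w.drop a).take s = y.reverse := by
    rw [← ha.reverse_take_drop_eq]
  have hright : (w.drop (a + s)).take s = y := by
    rw [← has.reverse_take_drop_eq, Nat.add_sub_cancel, hmid, List.reverse_reverse]
  have split : ∀ i, w.drop i = (w.drop i).take s ++ w.drop (i + s) := fun i => by
    rw [← List.drop_drop, List.take_append_drop]
  refine ⟨w.take (a - s) ++ y ++ w.drop (a + s + s), w.take (a - s), y, w.drop (a + s + s),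
    List.ne_nil_of_length_pos (by omega), ?_, rfl⟩
  conv_lhs => rw [← List.take_append_drop (a - s) w, split (a - s), Nat.sub_add_cancel ha.1,
    split a, hmid, split (a + s), hright]
  simp only [y, List.append_assoc]

section Rho

variable {w : List α} {c : ℕ}

theorem palAt_rho_of_pos (h : 0 < rho w c) : PalAt w c (rho w c) := by
  refine Nat.sSup_mem (s := {r | PalAt w c r}) (Set.nonempty_iff_ne_empty.mpr fun hempty => ?_)
    ⟨w.length, fun r (hr : PalAt w c r) => by have := hr.2.1; omega⟩
  simp [rho, hempty] at h

theorem add_rho_le_max (w : List α) (c : ℕ) : c + rho w c ≤ max c w.length := by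
  rcases Nat.eq_zero_or_pos (rho w c) with h | h
  · omega
  · have := (palAt_rho_of_pos h).2.1
    omega

theorem Sqsub.le_add_rho {d : ℕ} (h : Sqsub w c d) : d ≤ c + rho w c := h.2.2.1

theorem PPIrreducible.rho_le_sub (hpp : PPIrreducible w) {a d : ℕ} (had : a < d)
    (ha : d - a ≤ rho w a) : rho w d ≤ d - a := by
  by_contra! hd
  have hpa : PalAt w a (d - a) := (palAt_rho_of_pos (by omega)).mono_s13 ha
  have hpd : PalAt w d (rho w d) := palAt_rho_of_pos (by omega)
  have hlen := hpd.2.1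
  -- `ρ(d) > d - a` keeps the factor `y yᴿ y` clear of the last letter
  have hpd' : PalAt w.dropLast (a + (d - a)) (d - a) := by
    rw [Nat.add_sub_cancel' had.le]
    exact (hpd.mono_s13 hd.le).dropLast (by omega)
  obtain ⟨w', hw'⟩ := zReducible_of_palAt (by omega) (hpa.dropLast (by omega)) hpd'
  exact hpp w' hw'

end Rho

section MaxFrontier

variable {w : List α} {c d e : ℕ}

/-- A palindrome chain from `c` ending at `e` is recorded as `ReflTransGen (Sqsub w) c e`. -/
def chainFrontiers (w : List α) (c : ℕ) : Set ℕ :=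
  (fun e => e + rho w e) '' {e | ReflTransGen (Sqsub w) c e}

theorem maxFrontier_eq_sSup (w : List α) (c : ℕ) :
    maxFrontier w c = sSup (chainFrontiers w c) := by
  refine congrArg sSup (Set.ext fun f => ⟨?_, ?_⟩)
  · rintro ⟨l, hhead, hchain, e, hlast, rfl⟩
    have hne : l ≠ [] := by rintro rfl; simp at hhead
    refine ⟨e, ?_, rfl⟩
    have := List.relationReflTransGen_of_exists_isChain l hchain hne
    rwa [(List.head_eq_iff_head?_eq_some hne).mpr hhead, List.getLast_of_mem_getLast? hlast] at this
  · rintro ⟨e, hce, rfl⟩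
    obtain ⟨l, hchain, hlast⟩ := List.exists_isChain_cons_of_relationReflTransGen hce
    exact ⟨c :: l, rfl, hchain, e, hlast ▸ List.getLast?_eq_some_getLast _, rfl⟩

theorem max_le_max_of_reflTransGen (h : ReflTransGen (Sqsub w) c e) :
    max e w.length ≤ max c w.length := by
  induction h with
  | refl => rfl
  | tail _ hbd ih => have := hbd.le_add_rho.trans (add_rho_le_max w _); omega

theorem bddAbove_chainFrontiers (w : List α) (c : ℕ) : BddAbove (chainFrontiers w c) :=
  ⟨max c w.length, by
    rintro _ ⟨e, hce, rfl⟩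
    exact (add_rho_le_max w e).trans (max_le_max_of_reflTransGen hce)⟩

theorem le_maxFrontier (h : ReflTransGen (Sqsub w) c e) : e + rho w e ≤ maxFrontier w c := by
  rw [maxFrontier_eq_sSup]
  exact le_csSup (bddAbove_chainFrontiers w c) ⟨e, h, rfl⟩

theorem maxFrontier_le {m : ℕ} (H : ∀ e, ReflTransGen (Sqsub w) c e → e + rho w e ≤ m) :
    maxFrontier w c ≤ m := by
  rw [maxFrontier_eq_sSup]
  exact csSup_le ⟨_, c, .refl, rfl⟩ (by rintro _ ⟨e, hce, rfl⟩; exact H e hce)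

theorem exists_reflTransGen_maxFrontier_eq (w : List α) (c : ℕ) :
    ∃ e, ReflTransGen (Sqsub w) c e ∧ e + rho w e = maxFrontier w c := by
  obtain ⟨e, hce, he⟩ :=
    Nat.sSup_mem (s := chainFrontiers w c) ⟨_, c, .refl, rfl⟩ (bddAbove_chainFrontiers w c)
  exact ⟨e, hce, he.trans (maxFrontier_eq_sSup w c).symm⟩

theorem exists_reflTransGen_lt_le_add_rho (hce : ReflTransGen (Sqsub w) c e) (hcd : c < d)
    (hde : d ≤ e + rho w e) : ∃ a, ReflTransGen (Sqsub w) c a ∧ a < d ∧ d ≤ a + rho w a := by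
  induction hce using Relation.ReflTransGen.head_induction_on with
  | refl => exact ⟨e, .refl, hcd, hde⟩
  | @head a b hab _ ih =>
    by_cases hbd : b < d
    · obtain ⟨a', hba, had⟩ := ih hbd
      exact ⟨a', .head hab hba, had⟩
    · exact ⟨a, .refl, hcd, by have := hab.le_add_rho; omega⟩

theorem PPIrreducible.add_rho_le_maxFrontier (hpp : PPIrreducible w) (hcd : c < d)
    (hdF : d ≤ maxFrontier w c) : d + rho w d ≤ maxFrontier w c := by
  obtain ⟨e, hce, hF⟩ := exists_reflTransGen_maxFrontier_eq w c
  obtain ⟨a, hca, had, hda⟩ := exists_reflTransGen_lt_le_add_rho hce hcd (hF ▸ hdF)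
  have hrd : rho w d ≤ d - a := hpp.rho_le_sub had (by omega)
  rcases le_or_gt (a + rho w a) (d + rho w d) with hle | hlt
  · exact le_maxFrontier (hca.tail ⟨had, by omega, hda, hle⟩)
  · exact hlt.le.trans (le_maxFrontier hca)

end MaxFrontier

theorem maxFrontier_mono_general (w : List α) (hpp : PPIrreducible w) (c d : ℕ)
    (hcd : c < d) (h : d ≤ maxFrontier w c) :
    maxFrontier w d ≤ maxFrontier w c := by
  refine maxFrontier_le fun e hde => ?_
  suffices c < e ∧ e + rho w e ≤ maxFrontier w c from this.2
  induction hde with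
  | refl => exact ⟨hcd, hpp.add_rho_le_maxFrontier hcd h⟩
  | tail _ hbd ih =>
    have hcb := ih.1.trans hbd.1
    exact ⟨hcb, hpp.add_rho_le_maxFrontier hcb (hbd.le_add_rho.trans ih.2)⟩

/-- in a pp-irreducible string, if `c < d ≤ 𝓕_w(c)` then
`𝓕_w(c) ≥ 𝓕_w(d)`. -/
theorem maxFrontier_mono (w : List α) (hpp : PPIrreducible w) (c d : ℕ)
    (hc : 1 ≤ c) (hcd : c < d) (hd : d ≤ w.length) (h : d ≤ maxFrontier w c) :
    maxFrontier w d ≤ maxFrontier w c :=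
  maxFrontier_mono_general w hpp c d hcd h
end
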